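/- arXiv:1002.4561 — 2 statements merged into one kernel-verified Lean document; each statement's English description precedes it below -/
import Mathlib

section
/- In an iterated (nᵢ, tᵢ+1)-threshold secret sharing scheme, if a secret is shared through i iterations (each i-share being itself shared into (i+1)-shares), an adversary that knows at most tⱼ of the j-shares of each (j-1)-share for every level j ≤ i learns no information about the secret: every possible secret value is consistent with the adversary's view. -/
/-!
Whatever secret `v` is claimed, rebuild the sharing tree from the root down: at each node
re-share the node's new value with the perfect hiding of that level, keeping the at most
`ts j` children the adversary knows. Validity and agreement on the known shares then hold
node by node.
-/

namespace List

variable {M : Type*} (b : List ℕ → ℕ) (extend : (p : List ℕ) → M → Fin (b p) → M) (v : M)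

/-- Indexed by reversed paths, so that structural recursion walks from a node to the root. -/
def growTreeRev : List ℕ → M
  | [] => v
  | k :: rp => if hk : k < b rp.reverse then extend rp.reverse (growTreeRev rp) ⟨k, hk⟩ else v

theorem growTreeRev_cons {rp q : List ℕ} (hq : rp.reverse = q) (k : Fin (b q)) :
    growTreeRev b extend v ((k : ℕ) :: rp) = extend q (growTreeRev b extend v rp) k := by
  subst hq
  simp [growTreeRev]

theorem exists_tree_extend :
    ∃ T : List ℕ → M, T [] = v ∧
      ∀ (p : List ℕ) (k : Fin (b p)), T (p ++ [(k : ℕ)]) = extend p (T p) k :=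
  ⟨fun p => growTreeRev b extend v p.reverse, rfl, fun p k => by
    simpa using growTreeRev_cons b extend v (reverse_reverse p) k⟩

end List

/-- Iterated threshold secret sharing hides the secret: shares are organized in a tree,
where the value at path `p` of length `j` is a `j`-share, split via a perfectly hiding
`(ns j, ts j + 1)`-threshold scheme into its children `p ++ [k]`.  If for every level
`j ≤ i` the adversary knows at most `ts j` of the `j`-shares of each `(j-1)`-share,
then every possible secret value `v` is consistent with the adversary's view: there is
a valid sharing tree of `v` agreeing with the actual tree on all known shares. -/
theorem stmt6 {M : Type*} (i : ℕ) (ns ts : ℕ → ℕ)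
    -- `Valid j v g` : `g` is a valid level-`j` sharing of value `v` into `ns j` shares
    (Valid : (j : ℕ) → M → (Fin (ns j) → M) → Prop)
    -- perfect hiding: any ≤ ts j shares are consistent with every value
    (hperfect : ∀ j, ∀ A : Finset (Fin (ns j)), A.card ≤ ts j →
      ∀ v v' : M, ∀ g : Fin (ns j) → M, Valid j v g →
        ∃ g', Valid j v' g' ∧ ∀ a ∈ A, g' a = g a)
    -- the shares known to the adversary: at most `ts` shares of each share
    (K : (p : List ℕ) → Finset (Fin (ns p.length)))
    (hK : ∀ p, (K p).card ≤ ts p.length)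
    -- the actual sharing tree of some secret `val []`
    (val : List ℕ → M)
    (hval : ∀ p : List ℕ, p.length < i →
      Valid p.length (val p) (fun k => val (p ++ [(k : ℕ)])))
    (v : M) :
    ∃ val' : List ℕ → M,
      val' [] = v ∧
      (∀ p : List ℕ, p.length < i →
        Valid p.length (val' p) (fun k => val' (p ++ [(k : ℕ)]))) ∧
      (∀ p : List ℕ, p.length < i → ∀ k ∈ K p,
        val' (p ++ [(k : ℕ)]) = val (p ++ [(k : ℕ)])) := by
  have reshare : ∀ (p : List ℕ) (c : M), ∃ g : Fin (ns p.length) → M,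
      p.length < i → Valid p.length c g ∧ ∀ a ∈ K p, g a = val (p ++ [(a : ℕ)]) := by
    intro p c
    by_cases hp : p.length < i
    · obtain ⟨g, hvalid, hagree⟩ := hperfect _ (K p) (hK p) _ c _ (hval p hp)
      exact ⟨g, fun _ => ⟨hvalid, hagree⟩⟩
    · exact ⟨fun _ => c, fun h => absurd h hp⟩
  choose extend hextend using reshare
  obtain ⟨T, hroot, hchild⟩ := List.exists_tree_extend (fun p => ns p.length) extend v
  refine ⟨T, hroot, fun p hp => ?_, fun p hp k hk => ?_⟩
  · rw [show (fun k : Fin (ns p.length) => T (p ++ [(k : ℕ)])) = extend p (T p) from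
      funext (hchild p)]
    exact (hextend p (T p) hp).1
  · rw [hchild]
    exact (hextend p (T p) hp).2 k hk
end

section
/- Suppose 0 < ε < 1 and two fractions f'₀, f'₁ ∈ [0,1] of good processors vote for bit 0 and bit 1 respectively, with f'₀ + f'₁ ≤ 2/3 + ε. If there exist informed processors x and y with fraction_x ≥ (1-ε₀)(2/3 + ε/2) and fraction_x ≤ (1+ε₀)(f'₀ + 1/3 - ε), and similarly fraction_y ≥ (1-ε₀)(2/3 + ε/2) and fraction_y ≤ (1+ε₀)(f'₁ + 1/3 - ε), then both f'₀ and f'₁ are at least (1/3 + (3/2)ε - ε₀ - (3/2)ε·ε₀)/(1+ε₀); consequently, for ε₀ sufficiently small (as a function of ε), f'₀ + f'₁ > 2/3 + ε, a contradiction — hence no such pair x, y can exist. -/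
/-!
An informed processor that crosses the threshold with majority bit `b` bounds the fraction
`f'_b` of good processors voting `b` from below by roughly `1/3 + 3ε/2`. Two such processors
with opposite bits therefore force `f'₀ + f'₁ ≈ 2/3 + 3ε`, which exceeds the total
`2/3 + ε` of good processors once `ε₀` is small compared with `ε`.
-/

/-- The lower bound on `f'_b` certified by an informed processor crossing the threshold. -/
noncomputable def informedVoteBound (ε ε₀ : ℝ) : ℝ :=
  (1/3 + 3/2 * ε - ε₀ - 3/2 * ε * ε₀) / (1 + ε₀)

theorem informedVoteBound_le {ε ε₀ f fx : ℝ} (hε : 0 ≤ ε) (hε₀ : 0 ≤ ε₀)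
    (hlo : (1 - ε₀) * (2/3 + ε/2) ≤ fx) (hhi : fx ≤ (1 + ε₀) * (f + 1/3 - ε)) :
    informedVoteBound ε ε₀ ≤ f := by
  rw [informedVoteBound, div_le_iff₀ (by linarith)]
  nlinarith [mul_nonneg hε hε₀]

theorem add_lt_two_mul_informedVoteBound {ε ε₀ : ℝ} (hε : 0 < ε) (hε₀ : 0 ≤ ε₀)
    (hε₀ε : ε₀ ≤ ε / (2 * (1 + ε))) :
    2/3 + ε < 2 * informedVoteBound ε ε₀ := by
  -- the claim reduces to `ε₀ (8/3 + 4ε) < 2ε`, which follows from `4 ε₀ (1 + ε) ≤ 2ε`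
  have hε₀ε' : ε₀ * (2 * (1 + ε)) ≤ ε := (le_div_iff₀ (by positivity)).mp hε₀ε
  rw [informedVoteBound, mul_div_assoc', lt_div_iff₀ (by linarith)]
  nlinarith [mul_nonneg hε.le hε₀]

theorem stmt9_general (ε : ℝ) (hε : 0 < ε) :
    ∃ ε₁ : ℝ, 0 < ε₁ ∧
      ∀ ε₀ f0 f1 fx fy : ℝ, 0 < ε₀ → ε₀ ≤ ε₁ →
        0 ≤ f0 → f0 ≤ 1 → 0 ≤ f1 → f1 ≤ 1 →
        f0 + f1 ≤ 2/3 + ε →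
        (1 - ε₀) * (2/3 + ε/2) ≤ fx → fx ≤ (1 + ε₀) * (f0 + 1/3 - ε) →
        (1 - ε₀) * (2/3 + ε/2) ≤ fy → fy ≤ (1 + ε₀) * (f1 + 1/3 - ε) →
        ((1/3 + 3/2 * ε - ε₀ - 3/2 * ε * ε₀) / (1 + ε₀) ≤ f0 ∧
         (1/3 + 3/2 * ε - ε₀ - 3/2 * ε * ε₀) / (1 + ε₀) ≤ f1) ∧
        False := by
  refine ⟨ε / (2 * (1 + ε)), by positivity, ?_⟩
  intro ε₀ f0 f1 fx fy hε₀ hε₀ε _ _ _ _ hsum hx_lo hx_hi hy_lo hy_hi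
  have hf0 : informedVoteBound ε ε₀ ≤ f0 := informedVoteBound_le hε.le hε₀.le hx_lo hx_hi
  have hf1 : informedVoteBound ε ε₀ ≤ f1 := informedVoteBound_le hε.le hε₀.le hy_lo hy_hi
  exact ⟨⟨hf0, hf1⟩, by linarith [add_lt_two_mul_informedVoteBound hε hε₀.le hε₀ε]⟩

/-- No two informed processors can cross the threshold with opposite bits: if
`f'₀ + f'₁ ≤ 2/3 + ε` and informed processors `x, y` satisfy
`(1-ε₀)(2/3+ε/2) ≤ fraction_x ≤ (1+ε₀)(f'₀+1/3-ε)` and similarly for `y` with `f'₁`,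
then both `f'₀, f'₁ ≥ (1/3 + (3/2)ε - ε₀ - (3/2)ε·ε₀)/(1+ε₀)`, and for `ε₀`
sufficiently small this forces `f'₀ + f'₁ > 2/3 + ε`, a contradiction. -/
theorem stmt9 (ε : ℝ) (hε : 0 < ε) (hε1 : ε < 1) :
    ∃ ε₁ : ℝ, 0 < ε₁ ∧
      ∀ ε₀ f0 f1 fx fy : ℝ, 0 < ε₀ → ε₀ ≤ ε₁ →
        0 ≤ f0 → f0 ≤ 1 → 0 ≤ f1 → f1 ≤ 1 →
        f0 + f1 ≤ 2/3 + ε →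
        (1 - ε₀) * (2/3 + ε/2) ≤ fx → fx ≤ (1 + ε₀) * (f0 + 1/3 - ε) →
        (1 - ε₀) * (2/3 + ε/2) ≤ fy → fy ≤ (1 + ε₀) * (f1 + 1/3 - ε) →
        ((1/3 + 3/2 * ε - ε₀ - 3/2 * ε * ε₀) / (1 + ε₀) ≤ f0 ∧
         (1/3 + 3/2 * ε - ε₀ - 3/2 * ε * ε₀) / (1 + ε₀) ≤ f1) ∧
        False :=
  stmt9_general ε hε
end
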